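/- arXiv:0706.2065 — 2 statements merged into one kernel-verified Lean document; each statement's English description precedes it below -/
import Mathlib

section
/- Let X be a metric space, {V₁,…,V_p} a family of subsets, and φ₁,…,φ_p : X → [0,1] functions such that each φ_i is supported in V_i, is (4/r_i)-Lipschitz, at each point at most N+1 of the φ_i are nonzero, and Σφ_i ≥ 1 everywhere. Then there is a constant L_N depending only on N such that the map f = (Σφ_i)⁻¹(φ₁,…,φ_p) : X → Δ^{p−1} ⊂ ℝ^p restricted to any V_k on which r_j ≥ (3/4)·r_k for every j with V_j ∩ V_k ≠ ∅ is (L_N/r_k)-Lipschitz. -/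
/-!
Fix `x, y ∈ V k` and let `A` be the set of indices `i` with `φ i x ≠ 0` or `φ i y ≠ 0`, so
`#A ≤ 2N + 2`. Every `i ∈ A` has `V i` meeting `V k`, hence `r i ≥ 3 r k / 4` and
`|φ i x - φ i y| ≤ 16 / (3 r k) · d(x, y)`. Since both sums `Σ φ` are at least `1`, each coordinate
of the normalised vector moves by at most `|φ i x - φ i y| + |Σ φ x - Σ φ y|`, so the ℓ¹ distance,
which dominates the Euclidean one, is at most `(#A + 1) Σ_{i ∈ A} |φ i x - φ i y|`. This gives
`L_N = 16/3 · (2N + 3)(2N + 2)`.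
-/

open scoped Classical

open Finset

lemma abs_div_sub_div_le_of_one_le {a b s t : ℝ} (hs : 1 ≤ s) (ht : 0 < t) (hb : 0 ≤ b)
    (hbt : b ≤ t) : |a / s - b / t| ≤ |a - b| + |s - t| := by
  have hs0 : 0 < s := by linarith
  have key : a / s - b / t = (a - b) / s + b / t * ((t - s) / s) := by
    field_simp
    ring
  have hbt' : |b / t| ≤ 1 := by
    rw [abs_of_nonneg (by positivity)]
    exact div_le_one_of_le₀ hbt ht.le
  have hdiv (c : ℝ) : |c / s| ≤ |c| := by
    rw [abs_div, abs_of_pos hs0]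
    exact div_le_self (abs_nonneg _) hs
  calc |a / s - b / t| ≤ |(a - b) / s| + |b / t| * |(t - s) / s| := by
        rw [key, ← abs_mul]; exact abs_add_le _ _
    _ ≤ |a - b| + 1 * |t - s| :=
        add_le_add (hdiv _) (mul_le_mul hbt' (hdiv _) (abs_nonneg _) zero_le_one)
    _ = |a - b| + |s - t| := by rw [one_mul, abs_sub_comm t]

lemma EuclideanSpace.dist_le_sum_dist {ι : Type*} [Fintype ι] (x y : EuclideanSpace ℝ ι) :
    dist x y ≤ ∑ i, dist (x i) (y i) := by
  rw [EuclideanSpace.dist_eq]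
  calc √(∑ i, dist (x i) (y i) ^ 2) ≤ √((∑ i, dist (x i) (y i)) ^ 2) :=
        Real.sqrt_le_sqrt (sum_sq_le_sq_sum_of_nonneg fun i _ => dist_nonneg)
    _ = ∑ i, dist (x i) (y i) := Real.sqrt_sq (sum_nonneg fun i _ => dist_nonneg)

lemma dist_normalize_le {ι : Type*} [Fintype ι] {u v : ι → ℝ} (A : Finset ι)
    (hu : ∀ i ∉ A, u i = 0) (hv : ∀ i ∉ A, v i = 0) (hv0 : ∀ i, 0 ≤ v i)
    (hsu : 1 ≤ ∑ i, u i) (hsv : 1 ≤ ∑ i, v i) :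
    dist ((EuclideanSpace.equiv ι ℝ).symm fun i => u i / ∑ j, u j)
        ((EuclideanSpace.equiv ι ℝ).symm fun i => v i / ∑ j, v j)
      ≤ (#A + 1) * ∑ i ∈ A, |u i - v i| := by
  set D := ∑ i ∈ A, |u i - v i|
  have hsum : |∑ i, u i - ∑ i, v i| ≤ D := by
    rw [← sum_sub_distrib, ← sum_subset (subset_univ A) fun i _ hi => by simp [hu i hi, hv i hi]]
    exact abs_sum_le_sum_abs _ _
  calc _ ≤ ∑ i, |u i / ∑ j, u j - v i / ∑ j, v j| := EuclideanSpace.dist_le_sum_dist _ _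
    _ = ∑ i ∈ A, |u i / ∑ j, u j - v i / ∑ j, v j| :=
        (sum_subset (subset_univ A) fun i _ hi => by simp [hu i hi, hv i hi]).symm
    _ ≤ ∑ i ∈ A, (|u i - v i| + |∑ j, u j - ∑ j, v j|) := by
        gcongr with i
        exact abs_div_sub_div_le_of_one_le hsu (zero_lt_one.trans_le hsv) (hv0 i)
          (single_le_sum (fun j _ => hv0 j) (mem_univ i))
    _ ≤ D + #A * D := by
        rw [sum_add_distrib, sum_const, nsmul_eq_mul]
        gcongr
    _ = (#A + 1) * D := by ring

lemma LipschitzWith.abs_sub_le_of_mul_le {X : Type*} [PseudoMetricSpace X] {f : X → ℝ}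
    {c r a s : ℝ} (hf : LipschitzWith (c / r).toNNReal f) (hc : 0 ≤ c) (ha : 0 < a) (hs : 0 < s)
    (hr : a * s ≤ r) (x y : X) : |f x - f y| ≤ c / (a * s) * dist x y := by
  have hcr : c / r ≤ c / (a * s) := div_le_div_of_nonneg_left hc (by positivity) hr
  have hf' := hf.dist_le_mul x y
  rw [Real.coe_toNNReal _ (div_nonneg hc ((mul_pos ha hs).trans_le hr).le)] at hf'
  calc |f x - f y| = dist (f x) (f y) := (Real.dist_eq _ _).symm
    _ ≤ c / r * dist x y := hf'
    _ ≤ c / (a * s) * dist x y := by gcongr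

/-- Lemma 4.9 (lem:boundlip).  Given a partition-of-unity-type family `φ_i` supported
in `V_i`, each `(4/r_i)`-Lipschitz, with at most `N+1` of them nonzero at any point and
`Σφ_i ≥ 1`, there is a constant `L_N` depending only on `N` such that the map
`f = (Σφ_i)⁻¹(φ₁,…,φ_p) : X → Δ^{p−1} ⊂ ℝ^p` is `(L_N/r_k)`-Lipschitz on each `V_k`
all of whose neighbours satisfy `r_j ≥ (3/4) r_k`. -/
theorem stmt9 (N : ℕ) :
    ∃ L : ℝ, 0 < L ∧
      ∀ (X : Type) (_ : MetricSpace X) (p : ℕ)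
        (V : Fin p → Set X) (r : Fin p → ℝ) (φ : Fin p → X → ℝ),
        (∀ i, 0 < r i) →
        (∀ i x, φ i x ∈ Set.Icc (0 : ℝ) 1) →
        (∀ i, Function.support (φ i) ⊆ V i) →
        (∀ i, LipschitzWith (Real.toNNReal (4 / r i)) (φ i)) →
        (∀ x : X, (Finset.univ.filter fun i => φ i x ≠ 0).card ≤ N + 1) →
        (∀ x : X, 1 ≤ ∑ i, φ i x) →
        ∀ k : Fin p, (∀ j, (V j ∩ V k).Nonempty → 3 / 4 * r k ≤ r j) →
          LipschitzOnWith (Real.toNNReal (L / r k))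
            (fun x => (EuclideanSpace.equiv (Fin p) ℝ).symm
              (fun i => φ i x / ∑ j, φ j x)) (V k) := by
  refine ⟨16 / 3 * (2 * N + 3) * (2 * N + 2), by positivity, ?_⟩
  intro X _ p V r φ hr hφ hsupp hlip hcard hsum k hnb
  have hrk := hr k
  refine LipschitzOnWith.of_dist_le_mul fun x hx y hy => ?_
  rw [Real.coe_toNNReal _ (by positivity)]
  set A := (univ.filter fun i => φ i x ≠ 0) ∪ (univ.filter fun i => φ i y ≠ 0)
  have hA : #A ≤ 2 * N + 2 := (card_union_le _ _).trans (by linarith [hcard x, hcard y])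
  have hout : ∀ i ∉ A, φ i x = 0 ∧ φ i y = 0 := by simp [A]
  have hstep : ∀ i ∈ A, |φ i x - φ i y| ≤ 4 / (3 / 4 * r k) * dist x y := by
    intro i hi
    have hmeet : (V i ∩ V k).Nonempty := by
      rcases mem_union.1 hi with h | h
      · exact ⟨x, hsupp i (mem_filter.1 h).2, hx⟩
      · exact ⟨y, hsupp i (mem_filter.1 h).2, hy⟩
    exact (hlip i).abs_sub_le_of_mul_le (by norm_num) (by norm_num) hrk (hnb i hmeet) x y
  calc _ ≤ (#A + 1) * ∑ i ∈ A, |φ i x - φ i y| :=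
        dist_normalize_le A (fun i hi => (hout i hi).1) (fun i hi => (hout i hi).2)
          (fun i => (hφ i y).1) (hsum x) (hsum y)
    _ ≤ (#A + 1) * (#A * (4 / (3 / 4 * r k) * dist x y)) := by
        gcongr
        simpa using sum_le_card_nsmul A _ _ hstep
    _ ≤ (2 * N + 2 + 1) * ((2 * N + 2) * (4 / (3 / 4 * r k) * dist x y)) := by
        gcongr <;> exact_mod_cast hA
    _ = _ := by field_simp; ring
end

section
/- Let (Mₙ, gₙ, xₙ) be a sequence of pointed Riemannian 3-manifolds converging in the pointed C² topology to a finite-volume hyperbolic 3-manifold H (constant curvature −1). Suppose the sequence R̂(gₙ) = R_min(gₙ)·vol(gₙ)^{2/3} satisfies lim R̂(gₙ) > −6·vol(H)^{2/3}. Then a contradiction arises; i.e., any pointed hyperbolic limit H of such a sequence satisfies vol(H) ≤ liminf vol(gₙ) and limsup R_min(gₙ) ≤ −6, hence lim R̂(gₙ) ≤ −6·vol(H)^{2/3}. -/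
/-!
The compact cores `H̄(ξ)` of `H` are approximated in `Mₙ`, so for each `ξ ∈ (0,1)` eventually
`vol(gₙ) ≥ (1-ξ)²vol(H)` and `R_min(gₙ) ≤ -6(1-ξ) ≤ 0`; as `R_min(gₙ)` is nonpositive, the two
combine to `R̂(gₙ) ≤ -6(1-ξ)·((1-ξ)²vol(H))^{2/3}`. Each of the three claims thus holds
with an error depending continuously on `ξ`, and letting `ξ → 0⁺` removes it.
-/

open Filter Set Topology

section RightLimitAtZero

variable {α : Type*} [TopologicalSpace α] [Preorder α] [OrderClosedTopology α]
  {f : ℝ → α} {a : α}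

theorem le_of_forall_Ioo_le_of_continuousWithinAt (hf : ContinuousWithinAt f (Ioi 0) 0)
    (h : ∀ ξ ∈ Ioo (0 : ℝ) 1, f ξ ≤ a) : f 0 ≤ a :=
  le_of_tendsto hf (mem_of_superset (Ioo_mem_nhdsGT one_pos) h)

theorem le_of_forall_Ioo_ge_of_continuousWithinAt (hf : ContinuousWithinAt f (Ioi 0) 0)
    (h : ∀ ξ ∈ Ioo (0 : ℝ) 1, a ≤ f ξ) : a ≤ f 0 :=
  ge_of_tendsto hf (mem_of_superset (Ioo_mem_nhdsGT one_pos) h)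

end RightLimitAtZero

theorem mul_rpow_le_mul_rpow_of_nonpos {R c v w p : ℝ} (hRc : R ≤ c) (hc : c ≤ 0)
    (hw : 0 ≤ w) (hwv : w ≤ v) (hp : 0 ≤ p) : R * v ^ p ≤ c * w ^ p :=
  calc R * v ^ p ≤ R * w ^ p :=
        mul_le_mul_of_nonpos_left (Real.rpow_le_rpow hw hwv hp) (hRc.trans hc)
    _ ≤ c * w ^ p := mul_le_mul_of_nonneg_right hRc (Real.rpow_nonneg hw p)

theorem stmt18_general (Rmin vol : ℕ → ℝ) (volH ℓ : ℝ)
    (hvolH : 0 < volH)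
    (hvolbd : ∃ B : ℝ, ∀ n, vol n ≤ B)
    (hRbd : ∃ B : ℝ, ∀ n, B ≤ Rmin n)
    (hconv : ∀ ξ ∈ Set.Ioo (0:ℝ) 1, ∀ᶠ n in atTop,
      (1 - ξ) ^ 2 * volH ≤ vol n ∧ Rmin n ≤ -6 * (1 - ξ))
    (hlim : Tendsto (fun n => Rmin n * vol n ^ ((2:ℝ)/3)) atTop (nhds ℓ)) :
    volH ≤ atTop.liminf vol ∧ atTop.limsup Rmin ≤ -6 ∧
      ℓ ≤ -6 * volH ^ ((2:ℝ)/3) := by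
  obtain ⟨Bv, hBv⟩ := hvolbd
  obtain ⟨BR, hBR⟩ := hRbd
  have hvol_cobdd : IsCoboundedUnder (· ≥ ·) atTop vol :=
    (isBoundedUnder_of ⟨Bv, hBv⟩).isCoboundedUnder_ge
  have hR_cobdd : IsCoboundedUnder (· ≤ ·) atTop Rmin :=
    (isBoundedUnder_of ⟨BR, hBR⟩).isCoboundedUnder_le
  refine ⟨?_, ?_, ?_⟩
  · simpa using le_of_forall_Ioo_le_of_continuousWithinAt
      (f := fun ξ => (1 - ξ) ^ 2 * volH) (by fun_prop)
      fun ξ hξ => le_liminf_of_le hvol_cobdd ((hconv ξ hξ).mono fun _ hn => hn.1)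
  · simpa using le_of_forall_Ioo_ge_of_continuousWithinAt
      (f := fun ξ => -6 * (1 - ξ)) (by fun_prop)
      fun ξ hξ => limsup_le_of_le hR_cobdd ((hconv ξ hξ).mono fun _ hn => hn.2)
  · have hcont : Continuous fun ξ : ℝ => -6 * (1 - ξ) * ((1 - ξ) ^ 2 * volH) ^ ((2:ℝ)/3) :=
      by fun_prop (disch := norm_num)
    simpa using le_of_forall_Ioo_ge_of_continuousWithinAt hcont.continuousWithinAt
      fun ξ hξ => le_of_tendsto hlim <| (hconv ξ hξ).mono fun _ hn =>
        mul_rpow_le_mul_rpow_of_nonpos hn.2 (by linarith [hξ.2])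
          (mul_nonneg (sq_nonneg _) hvolH.le) hn.1 (by norm_num)

/-- Lemma 6.4 (lem:volume).  `Rmin n` and `vol n` are the minimum of the scalar
curvature and the volume of `(M, gₙ)`; `volH` is the volume of a pointed hyperbolic
C²-limit `H`.  C² convergence is encoded (as in the paper's proof) by `hconv`: for every
`ξ ∈ (0,1)`, eventually `vol n ≥ (1−ξ)²·vol(H)` and `Rmin n ≤ −6(1−ξ)` (a compact core
`H̄(ξ)` of `H`, of volume `≥ (1−ξ)vol(H)` and scalar curvature `−6`, is approximated in
`Mₙ`).  Then `vol(H) ≤ liminf vol(gₙ)`, `limsup Rmin(gₙ) ≤ −6`, and any limit `ℓ` of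
`R̂(gₙ) = Rmin(gₙ)·vol(gₙ)^{2/3}` satisfies `ℓ ≤ −6·vol(H)^{2/3}`; in particular the
assumption `lim R̂(gₙ) > −6·vol(H)^{2/3}` leads to a contradiction.
(The boundedness hypotheses make `liminf`/`limsup` well-behaved; boundedness of
`vol(gₙ)` is Hypothesis (1) of Theorem 0.3.) -/
theorem stmt18 (Rmin vol : ℕ → ℝ) (volH ℓ : ℝ)
    (hvolH : 0 < volH) (hvolpos : ∀ n, 0 < vol n)
    (hvolbd : ∃ B : ℝ, ∀ n, vol n ≤ B)
    (hRbd : ∃ B : ℝ, ∀ n, B ≤ Rmin n)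
    (hconv : ∀ ξ ∈ Set.Ioo (0:ℝ) 1, ∀ᶠ n in atTop,
      (1 - ξ) ^ 2 * volH ≤ vol n ∧ Rmin n ≤ -6 * (1 - ξ))
    (hlim : Tendsto (fun n => Rmin n * vol n ^ ((2:ℝ)/3)) atTop (nhds ℓ)) :
    volH ≤ atTop.liminf vol ∧ atTop.limsup Rmin ≤ -6 ∧
      ℓ ≤ -6 * volH ^ ((2:ℝ)/3) :=
  stmt18_general Rmin vol volH ℓ hvolH hvolbd hRbd hconv hlim
end
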